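/- arXiv:1509.05539 — 4 statements merged into one kernel-verified Lean document; each statement's English description precedes it below -/
import Mathlib

section
/- For every natural number n and every 2-coloring (red/blue) of the edges of the complete graph K_n, the vertex set of K_n can be partitioned into the vertex set of a red path and the vertex set of a blue path. -/
/-!
Insert the vertices one at a time, keeping a red path and a blue path that cover the vertices
seen so far. A new vertex `v` goes in front of the red path if its edge to the red head is red,
and in front of the blue path if its edge to the blue head is blue. Otherwise `v` sees the red
head `a` in blue and the blue head `b` in red, and the color of `ab` decides: if it is red, `b`
leaves the blue path and `v b a …` is red; if it is blue, `a` leaves the red path and `v a b …`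
is blue.
-/

open Finset

/-- `l` is (the vertex sequence of) a monochromatic path of color `i` in the graph `G`
under the edge coloring `c`.  The empty list and one-vertex lists qualify as
monochromatic paths of any color. -/
def IsMonoPath {V : Type*} {r : ℕ} (G : SimpleGraph V) (c : Sym2 V → Fin r) (i : Fin r)
    (l : List V) : Prop :=
  l.Nodup ∧ l.Chain' fun a b => G.Adj a b ∧ c s(a, b) = i

namespace IsMonoPath

variable {V : Type*} {r : ℕ} {G : SimpleGraph V} {c : Sym2 V → Fin r} {i : Fin r}
  {l : List V} {v : V}

theorem nil : IsMonoPath G c i [] := ⟨List.nodup_nil, List.isChain_nil⟩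

theorem tail (h : IsMonoPath G c i l) : IsMonoPath G c i l.tail :=
  ⟨h.1.sublist l.tail_sublist, h.2.tail⟩

theorem cons (h : IsMonoPath G c i l) (hv : v ∉ l)
    (hhead : ∀ a ∈ l.head?, G.Adj v a ∧ c s(v, a) = i) : IsMonoPath G c i (v :: l) :=
  ⟨List.nodup_cons.2 ⟨hv, h.1⟩, List.isChain_cons.2 ⟨hhead, h.2⟩⟩

theorem cons_top (h : IsMonoPath ⊤ c i l) (hv : v ∉ l)
    (hhead : ∀ a ∈ l.head?, c s(v, a) = i) : IsMonoPath ⊤ c i (v :: l) :=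
  h.cons hv fun a ha => ⟨fun hva => hv (hva ▸ List.mem_of_mem_head? ha), hhead a ha⟩

end IsMonoPath

section TwoColoring

variable {V : Type*} (c : Sym2 V → Fin 2)

theorem exists_monoPaths_perm_cons {lr lb : List V} {v : V} (hr : IsMonoPath ⊤ c 0 lr)
    (hb : IsMonoPath ⊤ c 1 lb) (hnd : (v :: (lr ++ lb)).Nodup) :
    ∃ lr' lb', IsMonoPath ⊤ c 0 lr' ∧ IsMonoPath ⊤ c 1 lb' ∧
      (lr' ++ lb').Perm (v :: (lr ++ lb)) := by
  obtain ⟨hv, hnd⟩ := List.nodup_cons.1 hnd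
  by_cases hvr : ∀ a ∈ lr.head?, c s(v, a) = 0
  · exact ⟨v :: lr, lb, hr.cons_top (fun h => hv (List.mem_append_left _ h)) hvr, hb, .refl _⟩
  by_cases hvb : ∀ b ∈ lb.head?, c s(v, b) = 1
  · exact ⟨lr, v :: lb, hr, hb.cons_top (fun h => hv (List.mem_append_right _ h)) hvb,
      List.perm_middle⟩
  obtain _ | ⟨a, tr⟩ := lr
  · simp at hvr
  obtain _ | ⟨b, tb⟩ := lb
  · simp at hvb
  replace hvr : c s(v, a) = 1 := by simp at hvr; omega
  replace hvb : c s(v, b) = 0 := by simp at hvb; omega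
  rcases (by omega : c s(a, b) = 0 ∨ c s(a, b) = 1) with hab | hab
  · refine ⟨v :: b :: a :: tr, tb, (hr.cons_top ?_ ?_).cons_top ?_ ?_, hb.tail, ?_⟩
    · exact fun hb => hnd.disjoint hb List.mem_cons_self
    · simpa [Sym2.eq_swap] using hab
    · simp_all
    · simpa using hvb
    · exact List.perm_middle.symm.cons v
  · refine ⟨tr, v :: a :: b :: tb, hr.tail, (hb.cons_top ?_ ?_).cons_top ?_ ?_, ?_⟩
    · exact fun ha => hnd.disjoint List.mem_cons_self ha
    · simpa using hab
    · simp_all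
    · simpa using hvr
    · exact List.perm_middle.trans (List.perm_middle.cons v)

theorem exists_monoPaths_perm (s : List V) (hs : s.Nodup) :
    ∃ lr lb, IsMonoPath ⊤ c 0 lr ∧ IsMonoPath ⊤ c 1 lb ∧ (lr ++ lb).Perm s := by
  induction s with
  | nil => exact ⟨[], [], .nil, .nil, .refl _⟩
  | cons v t ih =>
    obtain ⟨lr, lb, hr, hb, hperm⟩ := ih (List.nodup_cons.1 hs).2
    obtain ⟨lr', lb', hr', hb', hperm'⟩ :=
      exists_monoPaths_perm_cons c hr hb ((hperm.cons v).nodup_iff.2 hs)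
    exact ⟨lr', lb', hr', hb', hperm'.trans (hperm.cons v)⟩

theorem exists_monoPath_partition [Fintype V] :
    ∃ lr lb : List V, IsMonoPath ⊤ c 0 lr ∧ IsMonoPath ⊤ c 1 lb ∧ lr.Disjoint lb ∧
      ∀ v, v ∈ lr ∨ v ∈ lb := by
  obtain ⟨lr, lb, hr, hb, hperm⟩ := exists_monoPaths_perm c _ (univ : Finset V).nodup_toList
  refine ⟨lr, lb, hr, hb, (hperm.nodup_iff.2 (nodup_toList _)).disjoint, fun v => ?_⟩
  simpa using hperm.mem_iff.2 (mem_toList.2 (mem_univ v))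

end TwoColoring

/-- The vertex set of every 2-colored complete graph `K_n` can be partitioned into
the vertex set of a red path and the vertex set of a blue path. -/
theorem stmt_0 (n : ℕ) (c : Sym2 (Fin n) → Fin 2) :
    ∃ lr lb : List (Fin n),
      IsMonoPath (⊤ : SimpleGraph (Fin n)) c 0 lr ∧
      IsMonoPath (⊤ : SimpleGraph (Fin n)) c 1 lb ∧
      lr.Disjoint lb ∧
      ∀ v : Fin n, v ∈ lr ∨ v ∈ lb :=
  exists_monoPath_partition c
end

section
/- For every n ≥ 3 and every 2-coloring (red/blue) of the edges of the complete graph K_n, there is a Hamiltonian cycle of K_n whose edge set is the union of the edge set of a red path and the edge set of a blue path (one of the paths possibly empty). -/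
/-!
Build a Hamiltonian path whose edges are red up to a vertex `g` and blue after it, adding the
vertices one at a time. A new vertex `x` goes right after `g` if `gx` is red, and right before `g`
if `gx` is blue (in front of the path if `g` is its first vertex); either way the colours along the
path still switch at most once, from red to blue. Closing the path gives the cycle: a blue closing
edge comes last, and a red one comes first once the cycle starts at the last vertex of the path.
-/

/-- The list of edges of the cycle whose vertex sequence is `l`:
for `l = [v₁, …, vₙ]` these are `v₁v₂, …, vₙ₋₁vₙ, vₙv₁`. -/
def cycleEdges {V : Type*} (l : List V) : List (Sym2 V) :=
  (l.zip (l.rotate 1)).map fun p => s(p.1, p.2)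

variable {V : Type*}

def pathEdges : List V → List (Sym2 V)
  | a :: b :: l => s(a, b) :: pathEdges (b :: l)
  | _ => []

@[simp]
lemma pathEdges_nil : pathEdges ([] : List V) = [] := rfl

@[simp]
lemma pathEdges_singleton (a : V) : pathEdges [a] = [] := rfl

@[simp]
lemma pathEdges_cons_cons (a b : V) (l : List V) :
    pathEdges (a :: b :: l) = s(a, b) :: pathEdges (b :: l) := rfl

lemma pathEdges_append_pair (l : List V) (a b : V) :
    pathEdges (l ++ [a, b]) = pathEdges (l ++ [a]) ++ [s(a, b)] := by
  induction l with
  | nil => rfl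
  | cons x l ih => cases l <;> simp_all

lemma map_zip_append_singleton_eq_pathEdges (a z : V) (l : List V) :
    ((a :: l).zip (l ++ [z])).map (fun p => s(p.1, p.2)) = pathEdges (a :: (l ++ [z])) := by
  induction l generalizing a with
  | nil => rfl
  | cons b l ih => simp [ih]

lemma cycleEdges_cons (a : V) (l : List V) :
    cycleEdges (a :: l) = pathEdges (a :: (l ++ [a])) := by
  rw [cycleEdges, List.rotate_cons_succ, List.rotate_zero]
  exact map_zip_append_singleton_eq_pathEdges a a l

/-- Colour `0` is red and `1` is blue; along `E` the colour switches at most once. -/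
def IsRedThenBlue (c : Sym2 V → Fin 2) (E : List (Sym2 V)) : Prop :=
  (E.map c).Pairwise (· ≤ ·)

section IsRedThenBlue

variable {c : Sym2 V → Fin 2} {E : List (Sym2 V)}

@[simp]
lemma isRedThenBlue_nil : IsRedThenBlue c [] := List.Pairwise.nil

lemma isRedThenBlue_cons {e : Sym2 V} :
    IsRedThenBlue c (e :: E) ↔ (c e = 0 ∨ ∀ f ∈ E, c f = 1) ∧ IsRedThenBlue c E := by
  simp only [IsRedThenBlue, List.map_cons, List.pairwise_cons, List.forall_mem_map]
  refine and_congr_left fun _ => ⟨fun h => ?_, ?_⟩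
  · by_cases he : c e = 0
    · exact Or.inl he
    · exact Or.inr fun f hf => by have := h f hf; omega
  · rintro (he | hE) f hf
    · simp [he]
    · exact hE f hf ▸ Fin.le_last _

lemma isRedThenBlue_of_forall_eq_one (h : ∀ e ∈ E, c e = 1) : IsRedThenBlue c E := by
  induction E with
  | nil => exact isRedThenBlue_nil
  | cons e E ih =>
    simp only [List.mem_cons, forall_eq_or_imp] at h
    exact isRedThenBlue_cons.2 ⟨Or.inr h.2, ih h.2⟩

lemma IsRedThenBlue.append_singleton (hE : IsRedThenBlue c E) {e : Sym2 V} (he : c e = 1) :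
    IsRedThenBlue c (E ++ [e]) := by
  simp only [IsRedThenBlue, List.map_append, List.map_singleton, List.pairwise_append,
    List.mem_singleton, forall_eq]
  exact ⟨hE, List.pairwise_singleton _ _, fun _ _ => he ▸ Fin.le_last _⟩

lemma IsRedThenBlue.exists_take_drop (hE : IsRedThenBlue c E) :
    ∃ k, (∀ e ∈ E.take k, c e = 0) ∧ ∀ e ∈ E.drop k, c e = 1 := by
  induction E with
  | nil => exact ⟨0, by simp, by simp⟩
  | cons e E ih =>
    obtain ⟨hhead, hE⟩ := isRedThenBlue_cons.1 hE
    by_cases he : c e = 0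
    · obtain ⟨k, hred, hblue⟩ := ih hE
      exact ⟨k + 1, by simpa [he] using hred, by simpa using hblue⟩
    · refine ⟨0, by simp, ?_⟩
      simp only [List.drop_zero, List.mem_cons, forall_eq_or_imp]
      exact ⟨by omega, hhead.resolve_left he⟩

end IsRedThenBlue

section RedThenBluePaths

variable (c : Sym2 V → Fin 2)

lemma allBlue_or_exists_insert_after_head (x a : V) (q : List V)
    (h : IsRedThenBlue c (pathEdges (a :: q))) :
    ((∀ e ∈ pathEdges (a :: q), c e = 1) ∧ c s(x, a) = 1) ∨
      ∃ q', q'.Perm (x :: q) ∧ IsRedThenBlue c (pathEdges (a :: q')) := by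
  induction q generalizing a with
  | nil => exact Or.inr ⟨[x], .rfl, by simp [IsRedThenBlue]⟩
  | cons b t ih =>
    have insert_after_head (hblue : ∀ e ∈ pathEdges (b :: t), c e = 1)
        (hx : c s(a, x) = 0 ∨ c s(x, b) = 1) :
        IsRedThenBlue c (pathEdges (a :: x :: b :: t)) := by
      rw [pathEdges_cons_cons, pathEdges_cons_cons, isRedThenBlue_cons, isRedThenBlue_cons]
      refine ⟨?_, ?_, isRedThenBlue_of_forall_eq_one hblue⟩
      · rcases hx with hx | hx
        · exact Or.inl hx
        · exact Or.inr (by simpa [hx] using hblue)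
      · exact Or.inr hblue
    obtain ⟨hhead, ht⟩ := isRedThenBlue_cons.1 h
    by_cases hblue : ∀ e ∈ pathEdges (a :: b :: t), c e = 1
    · have hblue' : ∀ e ∈ pathEdges (b :: t), c e = 1 := fun e he => hblue e (by simp [he])
      by_cases hxa : c s(x, a) = 1
      · exact Or.inl ⟨hblue, hxa⟩
      · exact Or.inr ⟨x :: b :: t, .rfl,
          insert_after_head hblue' (Or.inl (by rw [Sym2.eq_swap]; omega))⟩
    · have hab : c s(a, b) = 0 := by
        by_contra hab
        refine hblue ?_
        simp only [pathEdges_cons_cons, List.mem_cons, forall_eq_or_imp]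
        exact ⟨by omega, hhead.resolve_left hab⟩
      right
      rcases ih b ht with ⟨hblue', hxb⟩ | ⟨q', hq', hq'red⟩
      · exact ⟨x :: b :: t, .rfl, insert_after_head hblue' (Or.inr hxb)⟩
      · refine ⟨b :: q', (hq'.cons b).trans (.swap x b t), ?_⟩
        rw [pathEdges_cons_cons]
        exact isRedThenBlue_cons.2 ⟨Or.inl hab, hq'red⟩

lemma exists_perm_cons_isRedThenBlue (x : V) {p : List V}
    (hp : IsRedThenBlue c (pathEdges p)) :
    ∃ p', p'.Perm (x :: p) ∧ IsRedThenBlue c (pathEdges p') := by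
  cases p with
  | nil => exact ⟨[x], .rfl, by simp⟩
  | cons a q =>
    rcases allBlue_or_exists_insert_after_head c x a q hp with ⟨hblue, hxa⟩ | ⟨q', hq', hq'red⟩
    · refine ⟨x :: a :: q, .rfl, ?_⟩
      rw [pathEdges_cons_cons]
      exact isRedThenBlue_cons.2 ⟨Or.inr hblue, hp⟩
    · exact ⟨a :: q', (hq'.cons a).trans (.swap x a q), hq'red⟩

lemma exists_perm_isRedThenBlue_pathEdges (t : List V) :
    ∃ p, p.Perm t ∧ IsRedThenBlue c (pathEdges p) := by
  induction t with
  | nil => exact ⟨[], .rfl, by simp⟩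
  | cons x t ih =>
    obtain ⟨p, hpt, hp⟩ := ih
    obtain ⟨p', hp', hp'red⟩ := exists_perm_cons_isRedThenBlue c x hp
    exact ⟨p', hp'.trans (hpt.cons x), hp'red⟩

lemma exists_perm_isRedThenBlue_cycleEdges {p : List V} (hp : IsRedThenBlue c (pathEdges p)) :
    ∃ l, l.Perm p ∧ IsRedThenBlue c (cycleEdges l) := by
  rcases p.eq_nil_or_concat' with rfl | ⟨t, z, rfl⟩
  · exact ⟨[], .rfl, by simp [cycleEdges]⟩
  obtain ⟨a, q, hp_eq⟩ := List.exists_cons_of_ne_nil (List.concat_ne_nil z t)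
  by_cases hza : c s(z, a) = 1
  · refine ⟨a :: q, hp_eq ▸ .rfl, ?_⟩
    rw [cycleEdges_cons, ← List.cons_append, ← hp_eq, List.append_assoc, List.singleton_append,
      pathEdges_append_pair]
    exact hp.append_singleton hza
  · refine ⟨z :: t, (List.perm_append_singleton z t).symm, ?_⟩
    rw [cycleEdges_cons, hp_eq, pathEdges_cons_cons, isRedThenBlue_cons, ← hp_eq]
    exact ⟨Or.inl (by omega), hp⟩

end RedThenBluePaths

theorem stmt_2_general (n : ℕ) (c : Sym2 (Fin n) → Fin 2) :
    ∃ (l : List (Fin n)) (k : ℕ),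
      l.Nodup ∧ (∀ v : Fin n, v ∈ l) ∧
      (∀ e ∈ (cycleEdges l).take k, c e = 0) ∧
      (∀ e ∈ (cycleEdges l).drop k, c e = 1) := by
  obtain ⟨p, hp, hpath⟩ := exists_perm_isRedThenBlue_pathEdges c (List.finRange n)
  obtain ⟨l, hl, hcycle⟩ := exists_perm_isRedThenBlue_cycleEdges c hpath
  obtain ⟨k, hred, hblue⟩ := hcycle.exists_take_drop
  have hperm := hl.trans hp
  exact ⟨l, k, hperm.nodup_iff.2 (List.nodup_finRange n),
    fun v => hperm.mem_iff.2 (List.mem_finRange v), hred, hblue⟩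

/-- For `n ≥ 3`, every 2-colored `K_n` has a simple Hamiltonian cycle: a Hamiltonian
cycle whose edge set is the union of the edge set of a red path and the edge set of a
blue path (one of the paths possibly empty).  Equivalently, listing the cycle as
`v₁, …, vₙ` (all vertices distinct and every vertex occurring), there is a `k` such that
the first `k` cycle edges are red and the remaining cycle edges are blue. -/
theorem stmt_2 (n : ℕ) (hn : 3 ≤ n) (c : Sym2 (Fin n) → Fin 2) :
    ∃ (l : List (Fin n)) (k : ℕ),
      l.Nodup ∧ (∀ v : Fin n, v ∈ l) ∧
      (∀ e ∈ (cycleEdges l).take k, c e = 0) ∧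
      (∀ e ∈ (cycleEdges l).drop k, c e = 1) :=
  stmt_2_general n c
end

section
/- For every integer r ≥ 1 there exist a natural number n and an r-coloring of the edges of the complete graph K_n such that no collection of at most r − 1 monochromatic paths covers all vertices of K_n; that is, at least r monochromatic paths are needed to cover the vertex set. -/
open Finset

namespace List

variable {α : Type*} {R : α → α → Prop} (p : α → Prop) [DecidablePred p]

theorem IsChain.countP_not_le_countP_add_one (hR : ∀ a b, R a b → p a ∨ p b) :
    ∀ {l : List α}, l.IsChain R → l.countP (¬ p ·) ≤ l.countP (p ·) + 1
  | [], _ => by simp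
  | [a], _ => by by_cases ha : p a <;> simp [ha]
  | a :: b :: l, .cons_cons hab h => by
    have ih := countP_not_le_countP_add_one hR h
    by_cases ha : p a
    · by_cases hb : p b <;> simp [ha, hb] at ih ⊢ <;> omega
    · have hb : p b := (hR a b hab).resolve_left ha
      have ih' := countP_not_le_countP_add_one hR h.tail
      simp [ha, hb] at ih' ⊢
      omega

theorem IsChain.countP_not_le_one (hR : ∀ a b, R a b → p a ∧ p b) :
    ∀ {l : List α}, l.IsChain R → l.countP (¬ p ·) ≤ 1
  | [], _ => by simp
  | [a], _ => by by_cases ha : p a <;> simp [ha]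
  | a :: _ :: _, .cons_cons hab h => by
    simpa [countP_cons, (hR _ _ hab).1] using countP_not_le_one hR h

theorem Nodup.countP_le_card_filter [Fintype α] [DecidableEq α] {l : List α} (hl : l.Nodup) :
    l.countP (p ·) ≤ #{a | p a} := by
  rw [countP_eq_length_filter, ← toFinset_card_of_nodup (hl.filter _)]
  exact card_le_card fun a ha => by simpa using (mem_filter.mp (mem_toFinset.mp ha)).2

end List

theorem card_filter_le_sum_countP {α : Type*} [Fintype α] [DecidableEq α] (p : α → Prop)
    [DecidablePred p] {L : List (List α)} (hL : ∀ a, ∃ l ∈ L, a ∈ l) :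
    #{a | p a} ≤ (L.map (·.countP (p ·))).sum := by
  rw [← List.countP_flatten, List.countP_eq_length_filter]
  refine (card_le_card fun a ha => ?_).trans (List.toFinset_card_le _)
  simpa [List.mem_flatten, (mem_filter.mp ha).2] using hL a

section MinColoring

variable {V : Type*} {r : ℕ}

def minColoring (f : V → Fin r) : Sym2 V → Fin r :=
  Sym2.lift ⟨fun a b => min (f a) (f b), fun _ _ => min_comm _ _⟩

variable [Fintype V] [DecidableEq V] {f : V → Fin r}

theorem IsMonoPath.countP_eq_le_card_lt_add_one {G : SimpleGraph V} {i j : Fin r} {l : List V}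
    (hl : IsMonoPath G (minColoring f) j l) (hji : j ≠ i) :
    l.countP (f · = i) ≤ #{v | f v < i} + 1 := by
  obtain ⟨hnd, hch⟩ := hl
  have hmin : ∀ a b, G.Adj a b ∧ minColoring f s(a, b) = j → min (f a) (f b) = j :=
    fun _ _ h => h.2
  rcases hji.lt_or_gt with hji | hij
  · calc l.countP (f · = i) ≤ l.countP (¬ f · = j) :=
          List.countP_mono_left fun v _ hv => by simp_all [hji.ne']
      _ ≤ l.countP (f · = j) + 1 :=
          List.IsChain.countP_not_le_countP_add_one _
            (fun a b h => (min_choice (f a) (f b)).imp (· ▸ hmin a b h) (· ▸ hmin a b h)) hch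
      _ ≤ #{v | f v = j} + 1 := Nat.add_le_add_right (hnd.countP_le_card_filter _) 1
      _ ≤ #{v | f v < i} + 1 := by
          gcongr
          exact fun hv => hv ▸ hji
  · calc l.countP (f · = i) ≤ l.countP (¬ i < f ·) :=
          List.countP_mono_left fun v _ hv => by simp_all
      _ ≤ 1 := List.IsChain.countP_not_le_one _
          (fun a b h => lt_min_iff.mp (by rw [hmin a b h]; exact hij)) hch
      _ ≤ #{v | f v < i} + 1 := le_add_self

theorem not_covered_of_card_lt (hf : ∀ i, (r - 1) * (#{v | f v < i} + 1) < #{v | f v = i})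
    {G : SimpleGraph V} {L : List (List V)} (hLr : L.length < r)
    (hL : ∀ l ∈ L, ∃ i, IsMonoPath G (minColoring f) i l) :
    ¬ ∀ v, ∃ l ∈ L, v ∈ l := by
  intro hcov
  have : NeZero r := ⟨by omega⟩
  choose! col hcol using hL
  obtain ⟨i, -, hi⟩ := exists_mem_notMem_of_card_lt_card (s := (L.map col).toFinset) (t := univ)
    (by simpa using (List.toFinset_card_le _).trans_lt (by simpa using hLr))
  have hbound : ∀ l ∈ L, l.countP (f · = i) ≤ #{v | f v < i} + 1 := fun l hl =>
    (hcol l hl).countP_eq_le_card_lt_add_one fun h => hi (by simpa using ⟨l, hl, h⟩)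
  refine (hf i).not_ge ?_
  calc #{v | f v = i} ≤ (L.map (·.countP (f · = i))).sum := card_filter_le_sum_countP _ hcov
    _ ≤ L.length * (#{v | f v < i} + 1) :=
        (List.sum_le_card_nsmul _ _ (by simpa using hbound)).trans_eq (by simp)
    _ ≤ (r - 1) * (#{v | f v < i} + 1) := Nat.mul_le_mul_right _ (by omega)

end MinColoring

def logClass (r : ℕ) (v : Fin ((r + 1) ^ r - 1)) : Fin r :=
  ⟨Nat.log (r + 1) (v + 1), Nat.log_lt_of_lt_pow (by omega) (by omega)⟩

theorem card_logClass_lt (r : ℕ) {k : ℕ} (hk : k ≤ r) :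
    #{v | (logClass r v : ℕ) < k} = (r + 1) ^ k - 1 := by
  have hpow : (r + 1) ^ k ≤ (r + 1) ^ r := Nat.pow_le_pow_right (by omega) hk
  have hlog (v : Fin ((r + 1) ^ r - 1)) : (logClass r v : ℕ) < k ↔ (v : ℕ) < (r + 1) ^ k - 1 := by
    have hr : r ≠ 0 := by rintro rfl; exact v.elim0
    exact (Nat.log_lt_iff_lt_pow (by omega) (by omega)).trans (by omega)
  rw [filter_congr fun v _ => hlog v, Fin.card_filter_val_lt]
  omega

theorem card_logClass_eq (r : ℕ) (i : Fin r) :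
    #{v | logClass r v = i} = r * (r + 1) ^ (i : ℕ) := by
  have hsplit : #{v | (logClass r v : ℕ) < i + 1} =
      #{v | (logClass r v : ℕ) < i} + #{v | logClass r v = i} := by
    rw [← card_union_of_disjoint (disjoint_filter.mpr fun _ _ h => Fin.ne_of_val_ne h.ne),
      ← filter_or]
    exact congrArg card (filter_congr fun v _ => by rw [Fin.ext_iff]; omega)
  rw [card_logClass_lt r i.isLt, card_logClass_lt r i.isLt.le, pow_succ', Nat.succ_mul] at hsplit
  have hpos : 0 < (r + 1) ^ (i : ℕ) := by positivity
  omega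

/-- For every `r ≥ 1` there is an `r`-colored complete graph `K_n` whose vertex set
cannot be covered by fewer than `r` monochromatic paths. -/
theorem stmt_3 (r : ℕ) (hr : 1 ≤ r) :
    ∃ (n : ℕ) (c : Sym2 (Fin n) → Fin r),
      ¬ ∃ L : List (List (Fin n)),
          L.length ≤ r - 1 ∧
          (∀ l ∈ L, ∃ i : Fin r, IsMonoPath (⊤ : SimpleGraph (Fin n)) c i l) ∧
          ∀ v : Fin n, ∃ l ∈ L, v ∈ l := by
  refine ⟨_, minColoring (logClass r), fun ⟨L, hlen, hmono, hcov⟩ => ?_⟩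
  refine not_covered_of_card_lt (fun i => ?_) (by omega) hmono hcov
  have hpos : 0 < (r + 1) ^ (i : ℕ) := by positivity
  rw [card_logClass_eq, show #{v | logClass r v < i} = (r + 1) ^ (i : ℕ) - 1 from
    card_logClass_lt r i.isLt.le, Nat.sub_add_cancel hpos]
  exact Nat.mul_lt_mul_of_pos_right (by omega) hpos
end

section
/- For every integer r ≥ 1, every natural number n, and every r-coloring of the edges of the complete graph K_n, the vertex set of K_n can be covered by at most r^4 + r^2 + 1 monochromatic paths (the paths need not be vertex disjoint). -/
open Finset

section

variable {V : Type*} {r : ℕ}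

theorem IsMonoPath.singleton (c : Sym2 V → Fin r) (i : Fin r) (v : V) :
    IsMonoPath ⊤ c i [v] :=
  ⟨List.nodup_singleton v, List.isChain_singleton v⟩

theorem IsMonoPath.cons_s4 {c : Sym2 V → Fin r} {i : Fin r} {x e : V} {l : List V}
    (h : IsMonoPath ⊤ c i (e :: l)) (hx : x ∉ e :: l) (hc : c s(x, e) = i) :
    IsMonoPath ⊤ c i (x :: e :: l) :=
  ⟨List.nodup_cons.2 ⟨hx, h.1⟩, List.isChain_cons_cons.2
    ⟨⟨(SimpleGraph.top_adj x e).2 fun hxe => hx (hxe ▸ List.mem_cons_self), hc⟩, h.2⟩⟩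

theorem isMonoPath_of_nodup (c : Sym2 V → Fin 1) {l : List V} (hl : l.Nodup) :
    IsMonoPath ⊤ c 0 l :=
  ⟨hl, hl.isChain.imp fun _ _ hab => ⟨(SimpleGraph.top_adj _ _).2 hab, Subsingleton.elim _ _⟩⟩

variable [Fintype V] [DecidableEq V]

def colorNbr (c : Sym2 V → Fin r) (s : Fin r) (w : V) : Finset V :=
  {v | v ≠ w ∧ c s(v, w) = s}

@[simp]
theorem mem_colorNbr {c : Sym2 V → Fin r} {s : Fin r} {w v : V} :
    v ∈ colorNbr c s w ↔ v ≠ w ∧ c s(v, w) = s := by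
  simp [colorNbr]

theorem sum_card_colorNbr (c : Sym2 V → Fin r) (w : V) :
    ∑ s, #(colorNbr c s w) = Fintype.card V - 1 := by
  rw [← card_univ, ← card_erase_of_mem (mem_univ w),
    card_eq_sum_card_fiberwise (f := fun v => c s(v, w)) (t := univ) fun _ _ => mem_univ _]
  congr! 2 with s
  ext v
  simp [and_comm]

theorem exists_majority_color (hr : 0 < r) (c : Sym2 V → Fin r) (w : V) :
    ∃ s, Fintype.card V - 1 ≤ r * #(colorNbr c s w) := by
  obtain ⟨s, -, hs⟩ := exists_le_of_sum_le (univ_nonempty_iff.2 ⟨(⟨0, hr⟩ : Fin r)⟩)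
    (f := fun _ => Fintype.card V - 1) (g := fun s => r * #(colorNbr c s w))
    (by simp [← mul_sum, sum_card_colorNbr])
  exact ⟨s, hs⟩

end

theorem Finset.sum_card_le_card_biUnion_add {ι α : Type*} [DecidableEq ι] [DecidableEq α]
    (A : ι → Finset α) {m : ℕ} (T : Finset ι)
    (hT : ∀ a ∈ T, ∀ b ∈ T, a ≠ b → #(A a ∩ A b) ≤ m) :
    ∑ w ∈ T, #(A w) ≤ #(T.biUnion A) + (#T).choose 2 * m := by
  induction T using Finset.induction_on with
  | empty => simp
  | @insert a T ha ih =>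
    have hnew : #(A a ∩ T.biUnion A) ≤ #T * m := calc
      #(A a ∩ T.biUnion A) = #(T.biUnion fun b => A a ∩ A b) := by rw [inter_biUnion]
      _ ≤ ∑ b ∈ T, #(A a ∩ A b) := card_biUnion_le
      _ ≤ ∑ _b ∈ T, m := sum_le_sum fun b hb =>
        hT a (mem_insert_self a T) b (mem_insert_of_mem hb) fun hab => ha (hab ▸ hb)
      _ = #T * m := by rw [sum_const, smul_eq_mul]
    have hunion := card_union_add_card_inter (A a) (T.biUnion A)
    have hrest := ih fun x hx y hy => hT x (mem_insert_of_mem hx) y (mem_insert_of_mem hy)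
    rw [sum_insert ha, biUnion_insert, card_insert_of_notMem ha, Nat.choose_succ_succ',
      Nat.choose_one_right]
    nlinarith

section

variable {V : Type*} [Fintype V] [DecidableEq V] {r : ℕ} (c : Sym2 V → Fin r) (s : Fin r)

def RichIn (m k : ℕ) (C : Finset V) : Prop :=
  ∀ T ⊆ C, #T = k + 1 → ∃ a ∈ T, ∃ b ∈ T, a ≠ b ∧ m ≤ #(colorNbr c s a ∩ colorNbr c s b)

variable {c s} {m k : ℕ} {C : Finset V}

theorem RichIn.mono {D : Finset V} (hC : RichIn c s m k C) (hD : D ⊆ C) : RichIn c s m k D :=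
  fun T hT => hC T (hT.trans hD)

theorem RichIn.eq_empty (hC : RichIn c s m 0 C) : C = ∅ := by
  by_contra hne
  obtain ⟨v, hv⟩ := nonempty_iff_ne_empty.2 hne
  obtain ⟨a, ha, b, hb, hab, -⟩ := hC {v} (singleton_subset_iff.2 hv) (card_singleton v)
  exact hab ((mem_singleton.1 ha).trans (mem_singleton.1 hb).symm)

theorem RichIn.of_poor {e : V} {D : Finset V} (hC : RichIn c s m (k + 1) C) (he : e ∈ C)
    (hD : D ⊆ C) (heD : e ∉ D) (hpoor : ∀ w ∈ D, #(colorNbr c s e ∩ colorNbr c s w) < m) :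
    RichIn c s m k D := by
  intro T hT hcard
  obtain ⟨a, ha, b, hb, hab, hrich⟩ := hC (insert e T) (insert_subset he (hT.trans hD))
    (by rw [card_insert_of_notMem fun h => heD (hT h), hcard])
  rcases mem_insert.1 ha with rfl | haT <;> rcases mem_insert.1 hb with rfl | hbT
  · exact absurd rfl hab
  · exact absurd hrich (hpoor b (hT hbT)).not_ge
  · exact absurd (inter_comm (colorNbr c s a) _ ▸ hrich) (hpoor a (hT haT)).not_ge
  · exact ⟨a, haT, b, hbT, hab, hrich⟩

theorem richIn_of_le_mul_card {q D : ℕ} (hdeg : ∀ w ∈ C, D ≤ q * #(colorNbr c s w))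
    (hD : q * (Fintype.card V + (k + 1).choose 2 * m) < (k + 1) * D) :
    RichIn c s (m + 1) k C := by
  intro T hT hcard
  by_contra! hpoor
  have hupper := sum_card_le_card_biUnion_add (colorNbr c s) T
    fun a ha b hb hab => Nat.lt_succ_iff.1 (hpoor a ha b hb hab)
  have hlower : (k + 1) * D ≤ q * ∑ w ∈ T, #(colorNbr c s w) := by
    rw [mul_sum, ← hcard, ← smul_eq_mul, ← sum_const]
    exact sum_le_sum fun w hw => hdeg w (hT hw)
  have hunion : #(T.biUnion (colorNbr c s)) ≤ Fintype.card V := card_le_univ _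
  rw [hcard] at hupper
  have := Nat.mul_le_mul_left q (hupper.trans (Nat.add_le_add_right hunion _))
  omega

end

section

variable {V : Type*} [Fintype V] [DecidableEq V] {r : ℕ} (c : Sym2 V → Fin r) (s : Fin r)

/-- Each extension step adds two vertices to the path, at least one of them in `C`; this keeps
the length bound, which makes a stuck path short. -/
theorem exists_monoPath_long_or_stuck {C : Finset V} {w : V} (hw : w ∈ C) (t : ℕ) :
    ∃ e P, e ∈ C ∧ IsMonoPath ⊤ c s (e :: P) ∧
      (e :: P).length + 1 ≤ 2 * #(C ∩ (e :: P).toFinset) ∧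
      (t + 1 ≤ #(C ∩ (e :: P).toFinset) ∨
        ∀ w' ∈ C, w' ∉ e :: P → colorNbr c s e ∩ colorNbr c s w' ⊆ (e :: P).toFinset) := by
  induction t with
  | zero => exact ⟨w, [], hw, .singleton c s w, by simp [hw], Or.inl (by simp [hw])⟩
  | succ t ih =>
    obtain ⟨e, P, he, hpath, hlen, hlong | hstuck⟩ := ih
    · by_cases hstuck : ∀ w' ∈ C, w' ∉ e :: P →
          colorNbr c s e ∩ colorNbr c s w' ⊆ (e :: P).toFinset
      · exact ⟨e, P, he, hpath, hlen, Or.inr hstuck⟩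
      push Not at hstuck
      obtain ⟨w', hw'C, hw'P, hsub⟩ := hstuck
      obtain ⟨u, hu, huP⟩ := not_subset.1 hsub
      simp only [mem_inter, mem_colorNbr] at hu
      rw [List.mem_toFinset] at huP
      have hcount : #(C ∩ (e :: P).toFinset) + 1 ≤ #(C ∩ (w' :: u :: e :: P).toFinset) := by
        rw [← card_insert_of_notMem fun hw' => hw'P (List.mem_toFinset.1 (mem_inter.1 hw').2)]
        refine card_le_card (insert_subset (by simp [hw'C]) fun x => ?_)
        simp only [mem_inter, List.mem_toFinset, List.mem_cons]
        tauto
      refine ⟨w', u :: e :: P, hw'C, (hpath.cons_s4 huP hu.1.2).cons_s4 ?_ ?_, ?_, Or.inl ?_⟩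
      · simp only [List.mem_cons, not_or] at hw'P ⊢
        exact ⟨Ne.symm hu.2.1, hw'P⟩
      · rw [Sym2.eq_swap]
        exact hu.2.2
      · simp only [List.length_cons] at hlen ⊢; omega
      · omega
    · exact ⟨e, P, he, hpath, hlen, Or.inr hstuck⟩

theorem exists_monoPathCover_of_richIn {j : ℕ} (hj : 0 < j) (k : ℕ) (C : Finset V)
    (hC : RichIn c s (2 * j) k C) :
    ∃ L : List (List V), (∀ l ∈ L, IsMonoPath ⊤ c s l) ∧ (∀ w ∈ C, ∃ l ∈ L, w ∈ l) ∧
      L.length ≤ #C / j + k := by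
  induction C using Finset.strongInduction generalizing k with
  | H C ih =>
  obtain _ | k := k
  · exact ⟨[], by simp, by simp [hC.eq_empty], by simp⟩
  obtain rfl | ⟨w, hw⟩ := C.eq_empty_or_nonempty
  · exact ⟨[], by simp, by simp, by simp⟩
  obtain ⟨e, P, he, hpath, hlen, hout⟩ := exists_monoPath_long_or_stuck c s hw (j - 1)
  set Q := e :: P
  have hrest : C \ Q.toFinset ⊂ C := (ssubset_iff_of_subset sdiff_subset).2 ⟨e, he, by simp [Q]⟩
  suffices ∃ L : List (List V), (∀ l ∈ L, IsMonoPath ⊤ c s l) ∧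
      (∀ w ∈ C \ Q.toFinset, ∃ l ∈ L, w ∈ l) ∧ L.length + 1 ≤ #C / j + (k + 1) by
    obtain ⟨L, hL, hcov, hlenL⟩ := this
    refine ⟨Q :: L, List.forall_mem_cons.2 ⟨hpath, hL⟩, fun x hx => ?_, by simpa using hlenL⟩
    by_cases hxQ : x ∈ Q
    · exact ⟨Q, List.mem_cons_self, hxQ⟩
    · obtain ⟨l, hl, hxl⟩ := hcov x (by simp [hx, hxQ])
      exact ⟨l, List.mem_cons_of_mem _ hl, hxl⟩
  by_cases hlong : j ≤ #(C ∩ Q.toFinset)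
  · obtain ⟨L, hL, hcov, hlenL⟩ := ih _ hrest (k + 1) (hC.mono sdiff_subset)
    have hcard := card_sdiff_add_card_inter C Q.toFinset
    refine ⟨L, hL, hcov, ?_⟩
    calc L.length + 1 ≤ #(C \ Q.toFinset) / j + 1 + (k + 1) := by omega
      _ = (#(C \ Q.toFinset) + j) / j + (k + 1) := by rw [Nat.add_div_right _ hj]
      _ ≤ #C / j + (k + 1) := by gcongr; omega
  · have hstuck := hout.resolve_left (by omega)
    have hpoor : ∀ w' ∈ C \ Q.toFinset, #(colorNbr c s e ∩ colorNbr c s w') < 2 * j := by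
      intro w' hw'
      rw [mem_sdiff, List.mem_toFinset] at hw'
      calc #(colorNbr c s e ∩ colorNbr c s w') ≤ #Q.toFinset :=
            card_le_card (hstuck w' hw'.1 hw'.2)
        _ ≤ Q.length := List.toFinset_card_le Q
        _ < 2 * j := by omega
    obtain ⟨L, hL, hcov, hlenL⟩ := ih _ hrest k
      (hC.of_poor he sdiff_subset (by simp [Q]) hpoor)
    have := Nat.div_le_div_right (c := j) (card_le_card (sdiff_subset : C \ Q.toFinset ⊆ C))
    exact ⟨L, hL, hcov, by omega⟩

end

theorem exists_block_size {r n : ℕ} (hr : 2 ≤ r) (hn : r ^ 4 + r ^ 2 + 2 ≤ n) :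
    ∃ j, 0 < j ∧ n < (r ^ 4 + 2) * j ∧
      r * (n + (r + 1).choose 2 * (2 * j - 1)) < (r + 1) * (n - 1) := by
  refine ⟨n / (r ^ 4 + 2) + 1, Nat.succ_pos _, Nat.lt_mul_div_succ n (by positivity), ?_⟩
  set k := n / (r ^ 4 + 2)
  have hk : (r ^ 4 + 2) * k ≤ n := Nat.mul_div_le n _
  have hk1 : 1 ≤ k := (Nat.le_div_iff_mul_le (by positivity)).2 (by nlinarith)
  have hchoose : (r + 1).choose 2 * 2 = (r + 1) * r := by
    rw [Nat.choose_two_right, Nat.div_mul_cancel (Nat.even_mul_pred_self _).two_dvd,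
      Nat.add_sub_cancel]
  rw [show 2 * (k + 1) - 1 = 2 * k + 1 by omega]
  obtain rfl | hr3 := hr.eq_or_lt
  · norm_num at hn hchoose ⊢
    omega
  · have hr2 : 9 ≤ r ^ 2 := by nlinarith
    have hX : 9 * (r ^ 2 * (r + 1)) ≤ 4 * r ^ 4 := by
      nlinarith [Nat.mul_le_mul_right (r ^ 3) hr3, Nat.mul_le_mul_right (r ^ 2) hr2]
    have hXk := Nat.mul_le_mul_right k hX
    obtain ⟨n, rfl⟩ : ∃ n', n = n' + 1 := ⟨n - 1, by omega⟩
    rw [Nat.add_sub_cancel]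
    nlinarith

theorem Nat.sum_div_le_div_sum {ι : Type*} (s : Finset ι) (f : ι → ℕ) (j : ℕ) :
    ∑ i ∈ s, f i / j ≤ (∑ i ∈ s, f i) / j := by
  rcases j.eq_zero_or_pos with rfl | hj
  · simp
  rw [Nat.le_div_iff_mul_le hj, sum_mul]
  exact sum_le_sum fun i _ => Nat.div_mul_le_self _ _

theorem exists_monoPathCover_of_two_le {V : Type*} [Fintype V] [DecidableEq V] {r : ℕ}
    (hr : 2 ≤ r) (c : Sym2 V → Fin r) (hV : r ^ 4 + r ^ 2 + 2 ≤ Fintype.card V) :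
    ∃ L : List (List V), L.length ≤ r ^ 4 + r ^ 2 + 1 ∧
      (∀ l ∈ L, ∃ i : Fin r, IsMonoPath ⊤ c i l) ∧ ∀ v, ∃ l ∈ L, v ∈ l := by
  obtain ⟨j, hj, hVj, hD⟩ := exists_block_size hr hV
  choose σ hσ using exists_majority_color (by omega : 0 < r) c
  have hrich (s : Fin r) : RichIn c s (2 * j) r {w | σ w = s} := by
    rw [← Nat.sub_add_cancel (by omega : 1 ≤ 2 * j)]
    exact richIn_of_le_mul_card (fun w hw => (mem_filter.1 hw).2 ▸ hσ w) hD
  choose F hF hcov hlen using fun s => exists_monoPathCover_of_richIn c s hj r _ (hrich s)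
  refine ⟨(List.finRange r).flatMap F, ?_, ?_, fun v => ?_⟩
  · have hfib := card_eq_sum_card_fiberwise (f := σ) (s := univ) (t := univ) fun _ _ => mem_univ _
    have hVj' := Nat.div_lt_of_lt_mul (mul_comm (r ^ 4 + 2) j ▸ hVj)
    rw [List.length_flatMap, ← Fin.sum_univ_def]
    calc ∑ s, (F s).length ≤ ∑ s, (#{w | σ w = s} / j + r) := sum_le_sum fun s _ => hlen s
      _ = ∑ s, #{w | σ w = s} / j + r * r := by simp [sum_add_distrib]
      _ ≤ Fintype.card V / j + r * r := by
        gcongr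
        rw [← card_univ, hfib]
        exact Nat.sum_div_le_div_sum _ _ _
      _ ≤ r ^ 4 + r ^ 2 + 1 := by nlinarith
  · intro l hl
    obtain ⟨s, -, hl⟩ := List.mem_flatMap.1 hl
    exact ⟨s, hF s l hl⟩
  · obtain ⟨l, hl, hvl⟩ := hcov (σ v) v (by simp)
    exact ⟨l, List.mem_flatMap.2 ⟨σ v, List.mem_finRange _, hl⟩, hvl⟩

/-- The vertex set of every `r`-colored complete graph `K_n` can be covered by at most
`r⁴ + r² + 1` monochromatic paths (not necessarily vertex disjoint). -/
theorem stmt_4 (r : ℕ) (hr : 1 ≤ r) (n : ℕ) (c : Sym2 (Fin n) → Fin r) :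
    ∃ L : List (List (Fin n)),
      L.length ≤ r ^ 4 + r ^ 2 + 1 ∧
      (∀ l ∈ L, ∃ i : Fin r, IsMonoPath (⊤ : SimpleGraph (Fin n)) c i l) ∧
      ∀ v : Fin n, ∃ l ∈ L, v ∈ l := by
  rcases le_or_gt n (r ^ 4 + r ^ 2 + 1) with hsmall | hbig
  · refine ⟨(List.finRange n).map ([·]), by simpa using hsmall, ?_,
      fun v => ⟨[v], by simp, by simp⟩⟩
    simp only [List.mem_map]
    rintro _ ⟨v, -, rfl⟩
    exact ⟨⟨0, hr⟩, .singleton c _ v⟩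
  obtain rfl | hr2 := hr.eq_or_lt
  · refine ⟨[List.finRange n], by simp, fun l hl => ⟨0, ?_⟩, by simp⟩
    exact List.mem_singleton.1 hl ▸ isMonoPath_of_nodup c (List.nodup_finRange n)
  exact exists_monoPathCover_of_two_le hr2 c (by rw [Fintype.card_fin]; exact hbig)
end
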